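/- Boosting lemma: let n ≥ 1, let D ⊆ {1, …, n}, and let G be the graph on vertex set {0,1}^n in which x and y are adjacent if and only if their Hamming distance lies in D. Let I be an independent set in G and let s ≥ 3 be an integer. Then α_s(G) ≥ (s − 1) · |I| · (1 − ((s − 2)/2) · |I| / 2^n), as an inequality of real numbers. -/

import Mathlib

/-!
Translating by a fixed vector `v` (coordinatewise xor, i.e. `v ∆ ·`) preserves Hamming distance,
so every translate of `I` is independent and a clique meets each translate at most once: a union
of `s - 1` translates of `I` is `K_s`-free. Choosing the translates greedily, averaging over all
`2^n` translates shows that the next one can be chosen to meet the union `S` built so far in at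
most `|I| |S| / 2^n ≤ j |I|² / 2^n` points, which accumulates to the quadratic loss term.
-/

open Finset

/-- The `r`-distance graph on the Boolean cube `{0,1}^n`: two vertices are adjacent
iff their Hamming distance equals `r`. -/
def cubeGraph (n r : ℕ) : SimpleGraph (Fin n → Bool) where
  Adj x y := x ≠ y ∧ hammingDist x y = r
  symm := by
    constructor
    rintro x y ⟨hne, hd⟩
    exact ⟨hne.symm, by rwa [hammingDist_comm]⟩
  loopless := by constructor; rintro x ⟨hne, -⟩; exact hne rfl

/-- `S` is `K_s`-free in `G`: it contains no `s` pairwise adjacent vertices. -/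
def IsKFree {V : Type*} (G : SimpleGraph V) (s : ℕ) (S : Finset V) : Prop :=
  ¬ ∃ T : Finset V, T ⊆ S ∧ T.card = s ∧ ∀ x ∈ T, ∀ y ∈ T, x ≠ y → G.Adj x y

/-- The `s`-independence number: the maximum size of a `K_s`-free vertex subset. -/
noncomputable def alphaS {V : Type*} [Fintype V] (G : SimpleGraph V) (s : ℕ) : ℕ :=
  sSup {m | ∃ S : Finset V, IsKFree G s S ∧ S.card = m}

/-- The Hamming weight (number of `true` coordinates) of a vertex of the cube. -/
def wt {n : ℕ} (x : Fin n → Bool) : ℕ := (univ.filter fun i => x i = true).card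

/-- The subgraph of `cubeGraph n r` induced on the `k`-th layer. -/
def layerGraph (n r k : ℕ) : SimpleGraph {x : Fin n → Bool // wt x = k} :=
  SimpleGraph.induce {x : Fin n → Bool | wt x = k} (cubeGraph n r)

open scoped symmDiff

section Translates

variable {α : Type*} [GeneralizedBooleanAlgebra α] [DecidableEq α]

theorem mem_image_symmDiff_left {I : Finset α} {v y : α} :
    y ∈ I.image (v ∆ ·) ↔ v ∆ y ∈ I := by
  refine ⟨fun h => ?_, fun h => mem_image.mpr ⟨v ∆ y, h, symmDiff_symmDiff_cancel_left v y⟩⟩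
  obtain ⟨x, hx, rfl⟩ := mem_image.mp h
  rwa [symmDiff_symmDiff_cancel_left]

theorem card_image_symmDiff_left (I : Finset α) (v : α) : #(I.image (v ∆ ·)) = #I :=
  card_image_of_injective I (symmDiff_right_injective v)

theorem sum_card_image_symmDiff_left_inter [Fintype α] (I S : Finset α) :
    ∑ v, #(I.image (v ∆ ·) ∩ S) = #I * #S := by
  have hcount : ∀ y : α, #{v | y ∈ I.image (v ∆ ·)} = #I := fun y => by
    have : ({v | y ∈ I.image (v ∆ ·)} : Finset α) = I.image (y ∆ ·) := by
      ext v
      simp only [mem_filter, mem_univ, true_and, mem_image_symmDiff_left, symmDiff_comm v y]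
    rw [this, card_image_symmDiff_left]
  calc ∑ v, #(I.image (v ∆ ·) ∩ S)
      = ∑ v, ∑ y ∈ S, if y ∈ I.image (v ∆ ·) then 1 else 0 := by
        simp_rw [inter_comm _ S, ← filter_mem_eq_inter, card_filter]
    _ = ∑ y ∈ S, #{v | y ∈ I.image (v ∆ ·)} := by
        rw [sum_comm]
        simp_rw [card_filter]
    _ = #I * #S := by rw [sum_congr rfl fun y _ => hcount y, sum_const, smul_eq_mul, mul_comm]

theorem exists_card_image_symmDiff_left_inter_le [Fintype α] (I S : Finset α) :
    ∃ v, #(I.image (v ∆ ·) ∩ S) * Fintype.card α ≤ #I * #S := by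
  obtain ⟨v, -, hv⟩ := exists_le_of_sum_le (s := univ) ⟨⊥, mem_univ _⟩
    (f := fun v => #(I.image (v ∆ ·) ∩ S) * Fintype.card α) (g := fun _ => #I * #S) (by
      rw [← sum_mul, sum_card_image_symmDiff_left_inter, sum_const, card_univ, smul_eq_mul,
        mul_comm])
  exact ⟨v, hv⟩

theorem exists_card_union_image_symmDiff_left_ge [Fintype α] (I S : Finset α) :
    ∃ v, (#S : ℝ) + #I - #I * #S / Fintype.card α ≤ #(S ∪ I.image (v ∆ ·)) := by
  obtain ⟨v, hv⟩ := exists_card_image_symmDiff_left_inter_le I S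
  refine ⟨v, ?_⟩
  have hN : (0 : ℝ) < Fintype.card α := by exact_mod_cast Fintype.card_pos_iff.mpr ⟨⊥⟩
  have hinter : (#(S ∩ I.image (v ∆ ·)) : ℝ) ≤ #I * #S / Fintype.card α := by
    rw [le_div_iff₀ hN, inter_comm]
    exact_mod_cast hv
  have hunion : (#(S ∪ I.image (v ∆ ·)) : ℝ) + #(S ∩ I.image (v ∆ ·)) = #S + #I := by
    exact_mod_cast card_image_symmDiff_left I v ▸ card_union_add_card_inter S (I.image (v ∆ ·))
  linarith

theorem exists_card_biUnion_image_symmDiff_left_ge [Fintype α] (I : Finset α) (j : ℕ) :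
    ∃ V : Finset α, #V ≤ j ∧ (j : ℝ) * #I * (1 - ((j : ℝ) - 1) / 2 * #I / Fintype.card α) ≤
      #(V.biUnion fun v => I.image (v ∆ ·)) := by
  induction j with
  | zero => exact ⟨∅, le_rfl, by simp⟩
  | succ j ih =>
    obtain ⟨V, hV, hS⟩ := ih
    set S := V.biUnion fun v => I.image (v ∆ ·)
    obtain ⟨v, hv⟩ := exists_card_union_image_symmDiff_left_ge I S
    refine ⟨insert v V, (card_insert_le v V).trans (by omega), ?_⟩
    have hSle : (#S : ℝ) ≤ j * #I := by
      have := card_biUnion_le_card_mul V _ #I fun v _ => (card_image_symmDiff_left I v).le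
      exact_mod_cast this.trans (Nat.mul_le_mul_right _ hV)
    have hoverlap : (#I : ℝ) * #S / Fintype.card α ≤ j * #I * #I / Fintype.card α := by
      rw [mul_comm (j : ℝ) #I, mul_assoc]
      gcongr
    rw [biUnion_insert, union_comm]
    push_cast
    linarith [show ((j : ℝ) + 1) * #I * (1 - ((j : ℝ) + 1 - 1) / 2 * #I / Fintype.card α) =
      (j : ℝ) * #I * (1 - ((j : ℝ) - 1) / 2 * #I / Fintype.card α) + #I -
        j * #I * #I / Fintype.card α by ring]

theorem card_le_of_isClique_subset_biUnion_image_symmDiff_left {G : SimpleGraph α}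
    (hG : ∀ v x y, G.Adj (v ∆ x) (v ∆ y) → G.Adj x y) {I : Finset α}
    (hI : ∀ x ∈ I, ∀ y ∈ I, ¬ G.Adj x y) {V T : Finset α} (hT : G.IsClique (T : Set α))
    (hTV : T ⊆ V.biUnion fun v => I.image (v ∆ ·)) : #T ≤ #V := by
  refine card_le_card_of_forall_subsingleton (fun t v => t ∈ I.image (v ∆ ·))
    (fun t ht => by simpa using hTV ht) fun v _ t₁ ⟨ht₁, h₁⟩ t₂ ⟨ht₂, h₂⟩ => ?_
  by_contra hne
  rw [mem_image_symmDiff_left] at h₁ h₂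
  refine hI _ h₁ _ h₂ (hG v _ _ ?_)
  simpa only [symmDiff_symmDiff_cancel_left] using hT ht₁ ht₂ hne

end Translates

theorem hammingDist_symmDiff_left {ι β : Type*} [Fintype ι] [GeneralizedBooleanAlgebra β]
    [DecidableEq β] (v x y : ι → β) : hammingDist (v ∆ x) (v ∆ y) = hammingDist x y :=
  hammingDist_comp (fun i => (v i ∆ ·)) fun i => symmDiff_right_injective (v i)

theorem IsKFree.card_le_alphaS {V : Type*} [Fintype V] {G : SimpleGraph V} {s : ℕ}
    {S : Finset V} (h : IsKFree G s S) : #S ≤ alphaS G s :=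
  le_csSup ⟨Fintype.card V, by rintro m ⟨S, -, rfl⟩; exact S.card_le_univ⟩ ⟨S, h, rfl⟩

theorem stmt12_general (n : ℕ) (D : Set ℕ)
    (G : SimpleGraph (Fin n → Bool))
    (hG : ∀ x y : Fin n → Bool, G.Adj x y ↔ hammingDist x y ∈ D)
    (I : Finset (Fin n → Bool)) (hI : ∀ x ∈ I, ∀ y ∈ I, ¬ G.Adj x y)
    (s : ℕ) (hs : 3 ≤ s) :
    ((s : ℝ) - 1) * I.card * (1 - ((s : ℝ) - 2) / 2 * I.card / 2 ^ n) ≤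
      (alphaS G s : ℝ) := by
  obtain ⟨V, hV, hS⟩ := exists_card_biUnion_image_symmDiff_left_ge I (s - 1)
  have hinv (v x y : Fin n → Bool) : G.Adj (v ∆ x) (v ∆ y) → G.Adj x y := by
    rw [hG, hG, hammingDist_symmDiff_left]
    exact id
  have hfree : IsKFree G s (V.biUnion fun v => I.image (v ∆ ·)) := by
    rintro ⟨T, hTV, hTs, hT⟩
    have := card_le_of_isClique_subset_biUnion_image_symmDiff_left hinv hI
      (fun x hx y hy => hT x hx y hy) hTV
    omega
  calc ((s : ℝ) - 1) * #I * (1 - ((s : ℝ) - 2) / 2 * #I / 2 ^ n)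
      = ((s - 1 : ℕ) : ℝ) * #I *
          (1 - (((s - 1 : ℕ) : ℝ) - 1) / 2 * #I / Fintype.card (Fin n → Bool)) := by
        push_cast [Nat.cast_sub (by omega : 1 ≤ s), Fintype.card_fun, Fintype.card_bool,
          Fintype.card_fin]
        ring
    _ ≤ #(V.biUnion fun v => I.image (v ∆ ·)) := hS
    _ ≤ alphaS G s := by exact_mod_cast hfree.card_le_alphaS

/-- **Boosting lemma.** Let `G` be a graph on `{0,1}^n` whose adjacency depends
only on the Hamming distance, via a set `D ⊆ {1, …, n}` of allowed distances.
If `I` is an independent set in `G` and `s ≥ 3`, then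
`α_s(G) ≥ (s − 1) · |I| · (1 − ((s − 2)/2) · |I| / 2^n)`. -/
theorem stmt12 (n : ℕ) (hn : 1 ≤ n) (D : Set ℕ) (hD : D ⊆ Set.Icc 1 n)
    (G : SimpleGraph (Fin n → Bool))
    (hG : ∀ x y : Fin n → Bool, G.Adj x y ↔ hammingDist x y ∈ D)
    (I : Finset (Fin n → Bool)) (hI : ∀ x ∈ I, ∀ y ∈ I, ¬ G.Adj x y)
    (s : ℕ) (hs : 3 ≤ s) :
    ((s : ℝ) - 1) * I.card * (1 - ((s : ℝ) - 2) / 2 * I.card / 2 ^ n) ≤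
      (alphaS G s : ℝ) :=
  stmt12_general n D G hG I hI s hs
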